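/- arXiv:1711.02297 — 3 statements merged into one kernel-verified Lean document; each statement's English description precedes it below -/
import Mathlib

section
/- Let K be a regular incidence complex of rank n with flag-transitive subgroup Γ, base flag Φ = {F_{-1},...,F_n}, and distinguished generating subgroups R_{-1},...,R_n. For 0 ≤ i ≤ j ≤ n-1 and φ, ψ ∈ Γ, the following are equivalent: (a) F_i φ ≤ F_j ψ; (b) φψ^{-1} ∈ Γ_{i+1}^+ Γ_{j-1}^-; (c) Γ_i φ ∩ Γ_j ψ ≠ ∅; where Γ_k := ⟨R_l : l ≠ k⟩, Γ_k^- := ⟨R_l : l ≤ k⟩, and Γ_k^+ := ⟨R_l : l ≥ k⟩. -/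
open Set Pointwise

/-- `Φ` is a flag of the subset `s` of the poset `α`: a chain contained in `s`
that is maximal among chains contained in `s`. -/
def IsFlagOf {α : Type*} [PartialOrder α] (s Φ : Set α) : Prop :=
  Φ ⊆ s ∧ IsChain (· ≤ ·) Φ ∧
    ∀ Ψ : Set α, Ψ ⊆ s → IsChain (· ≤ ·) Ψ → Φ ⊆ Ψ → Ψ = Φ

/-- Two flags are adjacent if each differs from the other in exactly one face. -/
def FlagAdj {α : Type*} [PartialOrder α] (Φ Ψ : Set α) : Prop :=
  (Φ \ Ψ).ncard = 1 ∧ (Ψ \ Φ).ncard = 1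

/-- The set `s` is flag-connected: any two flags of `s` are joined by a sequence
of successively adjacent flags of `s`. -/
def FlagConnIn {α : Type*} [PartialOrder α] (s : Set α) : Prop :=
  ∀ Φ Ψ : Set α, IsFlagOf s Φ → IsFlagOf s Ψ →
    Relation.ReflTransGen
      (fun A B => IsFlagOf s A ∧ IsFlagOf s B ∧ FlagAdj A B) Φ Ψ

/-- The section between `F` and `G` is connected: any two of its proper faces are
joined by a finite sequence of successively incident proper faces of the section. -/
def ConnIn {α : Type*} [PartialOrder α] (F G : α) : Prop :=
  ∀ H K : α, F < H → H < G → F < K → K < G →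
    Relation.ReflTransGen
      (fun a b => F < a ∧ a < G ∧ F < b ∧ b < G ∧ (a ≤ b ∨ b ≤ a)) H K

/-- An incidence complex of rank `n`: a bounded ranked poset (rank function `rk`
with range `{-1,…,n}`, strictly monotone, all flags having `n+2` elements hitting
every rank), strongly connected (I3), and with at least two `i`-faces between any
incident pair of faces of ranks `i-1` and `i+1` (I4). -/
structure IncComplex (α : Type*) [PartialOrder α] [BoundedOrder α]
    (n : ℤ) (rk : α → ℤ) : Prop where
  rk_bot : rk (⊥ : α) = -1
  rk_top : rk (⊤ : α) = n
  rk_strictMono : ∀ a b : α, a < b → rk a < rk b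
  chain_flag : ∀ c : Set α, IsChain (· ≤ ·) c →
    ∃ Φ : Set α, c ⊆ Φ ∧ IsFlagOf Set.univ Φ ∧ Φ.ncard = (n + 2).toNat
  flag_rk : ∀ Φ : Set α, IsFlagOf Set.univ Φ →
    ∀ i ∈ Set.Icc (-1 : ℤ) n, ∃ a ∈ Φ, rk a = i
  strong_conn : ∀ F G : α, F ≤ G → 2 ≤ rk G - rk F - 1 → ConnIn F G
  two_between : ∀ F G : α, F < G → rk G = rk F + 2 →
    ∃ H H' : α, H ≠ H' ∧ F < H ∧ H < G ∧ F < H' ∧ H' < G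

/-- A complex is regular if its automorphism group acts transitively on flags. -/
def IsRegularIC (α : Type*) [PartialOrder α] : Prop :=
  ∀ Φ Ψ : Set α, IsFlagOf Set.univ Φ → IsFlagOf Set.univ Ψ →
    ∃ g : α ≃o α, ⇑g '' Φ = Ψ

/-- `Γ` is a flag-transitive subgroup of the automorphism group. -/
def FlagTrans {α : Type*} [PartialOrder α] (Γ : Subgroup (α ≃o α)) : Prop :=
  ∀ Φ Ψ : Set α, IsFlagOf Set.univ Φ → IsFlagOf Set.univ Ψ →
    ∃ g ∈ Γ, ⇑g '' Φ = Ψ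

/-- The distinguished generating subset `R_i`: the stabilizer in `Γ` of
`Φ \ {F_i}`, where `F` enumerates the base flag by rank. -/
def Rset {α : Type*} [PartialOrder α] (Γ : Subgroup (α ≃o α)) (F : ℤ → α)
    (n i : ℤ) : Set (α ≃o α) :=
  {g | g ∈ Γ ∧ ∀ j ∈ Set.Icc (-1 : ℤ) n, j ≠ i → g (F j) = F j}

/-- The right action of an automorphism `φ` on a face `x` (so that
`(x · φ) · ψ = x · (φψ)`), written `x φ` in the paper. -/
def rAct {α : Type*} [PartialOrder α] (x : α) (φ : α ≃o α) : α := φ⁻¹ x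

/-!
Automorphisms preserve ranks, so an automorphism mapping the base flag onto a flag `Ψ` sends
`F k` to the `k`-face of `Ψ`. The key fact is that `⟨R_l : l ∉ J⟩` acts transitively on the
flags containing the faces `F k`, `k ∈ J`, proved by induction on the number of ranks missing
from `J`. If one of two flags through a common face of rank `k ∉ J` is reachable from the base
flag, so is the other, by the induction hypothesis for `J ∪ {k}`. Given `Ψ` and a missing rank
`m` between consecutive elements `a < m < b` of `J`, strong connectivity of the section
`F a < · < F b` links `F m` to the `m`-face of `Ψ` by incident faces, along which such steps
carry the base flag to `Ψ`. When `b = a + 2` this section is not connected, and a single exchange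
of the `m`-face, realised in `R_m`, is used instead.

For (a) ⇒ (b), put `χ = φψ⁻¹`: the flag through `F (-1), …, F i` and `χ (F j), …, χ (F n)` is
reached by some `y ∈ Γ_{i+1}^+`, and `y⁻¹χ` fixes `F j, …, F n`, so it lies in `Γ_{j-1}^-` by
transitivity again. (b) ⇒ (c) is group theory, and (c) ⇒ (a) holds because `Γ_k` fixes `F k`.
-/

theorem isFlagOf_univ_iff {α : Type*} [PartialOrder α] {Φ : Set α} :
    IsFlagOf univ Φ ↔ IsMaxChain (· ≤ ·) Φ := by
  simp only [IsFlagOf, IsMaxChain, subset_univ, true_implies, true_and]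
  exact and_congr_right fun _ =>
    ⟨fun h _ ht hΦt => (h _ ht hΦt).symm, fun h _ ht hΦt => (h ht hΦt).symm⟩

theorem IsFlagOf.image {α : Type*} [PartialOrder α] {Φ : Set α} (h : IsFlagOf univ Φ)
    (g : α ≃o α) : IsFlagOf univ (g '' Φ) :=
  isFlagOf_univ_iff.2 ((isFlagOf_univ_iff.1 h).image g)

namespace IncComplex

variable {α : Type*} [PartialOrder α] [BoundedOrder α] {n : ℤ} {rk : α → ℤ}
  (hK : IncComplex α n rk)
include hK

theorem rk_le_rk {x y : α} (h : x ≤ y) : rk x ≤ rk y := by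
  rcases h.eq_or_lt with rfl | h
  exacts [le_rfl, (hK.rk_strictMono _ _ h).le]

theorem rk_mem (x : α) : rk x ∈ Icc (-1) n :=
  ⟨hK.rk_bot ▸ hK.rk_le_rk bot_le, hK.rk_top ▸ hK.rk_le_rk le_top⟩

theorem neg_one_le : -1 ≤ n :=
  hK.rk_bot ▸ hK.rk_top ▸ hK.rk_le_rk bot_le

theorem eq_of_le_of_rk_le {x y : α} (h : x ≤ y) (hr : rk y ≤ rk x) : x = y :=
  h.eq_of_not_lt fun hlt => (hK.rk_strictMono _ _ hlt).not_ge hr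

theorem le_of_mem_chain {c : Set α} (hc : IsChain (· ≤ ·) c) {x y : α} (hx : x ∈ c)
    (hy : y ∈ c) (h : rk x ≤ rk y) : x ≤ y :=
  (hc.total hx hy).elim id fun hyx => (hK.eq_of_le_of_rk_le hyx h).ge

theorem lt_of_mem_chain {c : Set α} (hc : IsChain (· ≤ ·) c) {x y : α} (hx : x ∈ c)
    (hy : y ∈ c) (h : rk x < rk y) : x < y :=
  (hK.le_of_mem_chain hc hx hy h.le).lt_of_ne fun hxy => h.ne (congrArg rk hxy)

theorem eq_of_mem_chain {c : Set α} (hc : IsChain (· ≤ ·) c) {x y : α} (hx : x ∈ c)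
    (hy : y ∈ c) (h : rk x = rk y) : x = y :=
  le_antisymm (hK.le_of_mem_chain hc hx hy h.le) (hK.le_of_mem_chain hc hy hx h.ge)

theorem exists_isFlagOf_superset {c : Set α} (hc : IsChain (· ≤ ·) c) :
    ∃ Ψ, c ⊆ Ψ ∧ IsFlagOf univ Ψ :=
  let ⟨Ψ, hcΨ, hΨ, _⟩ := hK.chain_flag c hc
  ⟨Ψ, hcΨ, hΨ⟩

theorem isFlagOf_of_isChain {Ψ : Set α} (hΨ : IsChain (· ≤ ·) Ψ)
    (hrk : ∀ k ∈ Icc (-1) n, ∃ x ∈ Ψ, rk x = k) : IsFlagOf univ Ψ := by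
  refine ⟨subset_univ _, hΨ, fun Ξ _ hΞ hΨΞ => hΨΞ.antisymm' fun x hx => ?_⟩
  obtain ⟨y, hy, hyx⟩ := hrk _ (hK.rk_mem x)
  rwa [hK.eq_of_mem_chain hΞ hx (hΨΞ hy) hyx.symm]

theorem isFlagOf_insert_diff {Ψ : Set α} (hΨ : IsFlagOf univ Ψ) {x y : α} (hx : x ∈ Ψ)
    (hy : rk y = rk x) (hlt : ∀ z ∈ Ψ, rk z < rk x → z ≤ y)
    (hgt : ∀ z ∈ Ψ, rk x < rk z → y ≤ z) : IsFlagOf univ (insert y (Ψ \ {x})) := by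
  refine hK.isFlagOf_of_isChain ((hΨ.2.1.mono sdiff_subset).insert fun z hz _ => ?_)
    fun k hk => ?_
  · rcases lt_trichotomy (rk z) (rk x) with h | h | h
    · exact .inr (hlt z hz.1 h)
    · exact (hz.2 (hK.eq_of_mem_chain hΨ.2.1 hz.1 hx h)).elim
    · exact .inl (hgt z hz.1 h)
  · obtain ⟨z, hz, rfl⟩ := hK.flag_rk Ψ hΨ k hk
    by_cases hzx : z = x
    · exact ⟨y, mem_insert _ _, hzx ▸ hy⟩
    · exact ⟨z, mem_insert_of_mem _ ⟨hz, hzx⟩, rfl⟩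

theorem covBy_iff {x y : α} : x ⋖ y ↔ x < y ∧ rk y = rk x + 1 := by
  refine ⟨fun h => ⟨h.lt, ?_⟩, fun ⟨hlt, hr⟩ => ⟨hlt, fun z hxz hzy => ?_⟩⟩
  · obtain ⟨Ψ, hxyΨ, hΨ⟩ := hK.exists_isFlagOf_superset (IsChain.pair h.le)
    have hxy := hK.rk_strictMono _ _ h.lt
    obtain ⟨z, hz, hzr⟩ := hK.flag_rk Ψ hΨ (rk x + 1)
      ⟨by linarith [(hK.rk_mem x).1], by linarith [(hK.rk_mem y).2]⟩
    by_contra hne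
    exact h.2 (hK.lt_of_mem_chain hΨ.2.1 (hxyΨ (mem_insert _ _)) hz (by omega))
      (hK.lt_of_mem_chain hΨ.2.1 hz (hxyΨ (mem_insert_of_mem _ rfl)) (by omega))
  · have := hK.rk_strictMono _ _ hxz
    have := hK.rk_strictMono _ _ hzy
    omega

/-- Automorphisms preserve `⊥` and the covering relation, which by `covBy_iff` raises the rank
by one. -/
theorem rk_apply (g : α ≃o α) (x : α) : rk (g x) = rk x := by
  suffices ∀ k, -1 ≤ k → ∀ x, rk x = k → rk (g x) = k from this _ (hK.rk_mem x).1 x rfl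
  intro k hk
  induction k, hk using Int.leInduction with
  | base =>
    intro x hx
    rw [← hK.eq_of_le_of_rk_le bot_le (hx.trans hK.rk_bot.symm).le, map_bot, hK.rk_bot]
  | succ k hk ih =>
    intro x hx
    obtain ⟨Ψ, hxΨ, hΨ⟩ := hK.exists_isFlagOf_superset (IsChain.singleton (a := x))
    obtain ⟨w, hw, hwk⟩ := hK.flag_rk Ψ hΨ k ⟨hk, by linarith [(hK.rk_mem x).2]⟩
    have hwx : w ⋖ x := hK.covBy_iff.2
      ⟨hK.lt_of_mem_chain hΨ.2.1 hw (hxΨ rfl) (by omega), by omega⟩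
    rw [(hK.covBy_iff.1 ((apply_covBy_apply_iff g).2 hwx)).2, ih w hwk]

end IncComplex

section BaseFlag

variable {α : Type*} [PartialOrder α] {n : ℤ} {Γ : Subgroup (α ≃o α)} {F : ℤ → α}

/-- `⟨R_l : l ∈ S⟩`; the paper's `Γ_k`, `Γ_k^-` and `Γ_k^+` are the cases `S = {k}ᶜ`,
`S = {l ≤ k}` and `S = {l ≥ k}`. -/
def rsetClosure (Γ : Subgroup (α ≃o α)) (F : ℤ → α) (n : ℤ) (S : Set ℤ) :
    Subgroup (α ≃o α) :=
  Subgroup.closure (⋃ l ∈ S, Rset Γ F n l)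

theorem rsetClosure_mono {S T : Set ℤ} (h : S ⊆ T) :
    rsetClosure Γ F n S ≤ rsetClosure Γ F n T :=
  Subgroup.closure_mono (biUnion_subset_biUnion_left h)

theorem rsetClosure_le (S : Set ℤ) : rsetClosure Γ F n S ≤ Γ :=
  (Subgroup.closure_le _).2 (iUnion₂_subset fun _ _ _ hg => hg.1)

theorem Rset_subset_rsetClosure {S : Set ℤ} {l : ℤ} (hl : l ∈ S) :
    Rset Γ F n l ⊆ rsetClosure Γ F n S :=
  fun _ hg => Subgroup.subset_closure (mem_biUnion hl hg)

theorem rsetClosure_le_stabilizer {S : Set ℤ} {k : ℤ} (hk : k ∈ Icc (-1) n) (hkS : k ∉ S) :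
    rsetClosure Γ F n S ≤ MulAction.stabilizer (α ≃o α) (F k) :=
  (Subgroup.closure_le _).2 <| iUnion₂_subset fun _ hl _ hg =>
    hg.2 k hk fun hkl => hkS (hkl ▸ hl)

def ReachableFlag (Γ : Subgroup (α ≃o α)) (F : ℤ → α) (n : ℤ) (J : Set ℤ) (Ψ : Set α) :
    Prop :=
  ∃ τ ∈ rsetClosure Γ F n (Icc (-1) n \ J), ⇑τ '' (F '' Icc (-1) n) = Ψ

def AllFlagsReachable (Γ : Subgroup (α ≃o α)) (F : ℤ → α) (n : ℤ) (J : Set ℤ) : Prop :=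
  ∀ Ψ, IsFlagOf univ Ψ → F '' J ⊆ Ψ → ReachableFlag Γ F n J Ψ

theorem ReachableFlag.base (J : Set ℤ) : ReachableFlag Γ F n J (F '' Icc (-1) n) :=
  ⟨1, one_mem _, by simp⟩

theorem ReachableFlag.mono {J J' : Set ℤ} {Ψ : Set α} (h : ReachableFlag Γ F n J' Ψ)
    (hJ : J ⊆ J') : ReachableFlag Γ F n J Ψ :=
  let ⟨τ, hτ, hτΨ⟩ := h
  ⟨τ, rsetClosure_mono (sdiff_subset_sdiff_right hJ) hτ, hτΨ⟩

variable [BoundedOrder α] {rk : α → ℤ} (hK : IncComplex α n rk)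
  (hFflag : IsFlagOf univ (F '' Icc (-1) n)) (hFrk : ∀ i ∈ Icc (-1) n, rk (F i) = i)
include hK hFflag hFrk

omit hFflag in
theorem IncComplex.base_bot_mem {Ψ : Set α} (hΨ : IsFlagOf univ Ψ) :
    F (-1) ∈ Ψ := by
  have hbot : F (-1) = ⊥ :=
    (hK.eq_of_le_of_rk_le bot_le (by rw [hK.rk_bot, hFrk _ ⟨le_rfl, hK.neg_one_le⟩])).symm
  exact hbot ▸ (isFlagOf_univ_iff.1 hΨ).bot_mem

omit hFflag in
theorem IncComplex.base_top_mem {Ψ : Set α} (hΨ : IsFlagOf univ Ψ) : F n ∈ Ψ := by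
  have htop : F n = ⊤ :=
    hK.eq_of_le_of_rk_le le_top (by rw [hK.rk_top, hFrk _ ⟨hK.neg_one_le, le_rfl⟩])
  exact htop ▸ (isFlagOf_univ_iff.1 hΨ).top_mem

theorem IncComplex.base_strictMonoOn : StrictMonoOn F (Icc (-1) n) := fun k hk l hl hkl =>
  hK.lt_of_mem_chain hFflag.2.1 (mem_image_of_mem F hk) (mem_image_of_mem F hl)
    (by rwa [hFrk k hk, hFrk l hl])

theorem IncComplex.apply_base_eq {τ : α ≃o α} {k : ℤ} (hk : k ∈ Icc (-1) n) {x : α}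
    (hx : x ∈ τ '' (F '' Icc (-1) n)) (hxk : rk x = k) : τ (F k) = x :=
  hK.eq_of_mem_chain (hFflag.image τ).2.1 (mem_image_of_mem _ (mem_image_of_mem F hk)) hx
    (by rw [hK.rk_apply, hFrk k hk, hxk])

omit hFrk in
theorem IncComplex.exists_mem_Rset_image_eq (hΓ : FlagTrans Γ) {m : ℤ} {Ψ : Set α}
    (hΨ : IsFlagOf univ Ψ) (hsub : ∀ k ∈ Icc (-1) n, k ≠ m → F k ∈ Ψ) :
    ∃ ρ ∈ Rset Γ F n m, ⇑ρ '' (F '' Icc (-1) n) = Ψ := by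
  obtain ⟨ρ, hρΓ, hρΨ⟩ := hΓ _ _ hFflag hΨ
  refine ⟨ρ, ⟨hρΓ, fun k hk hkm => ?_⟩, hρΨ⟩
  exact hK.eq_of_mem_chain hΨ.2.1 (hρΨ ▸ mem_image_of_mem _ (mem_image_of_mem F hk))
    (hsub k hk hkm) (by rw [hK.rk_apply])

theorem ReachableFlag.of_adjacent (hΓ : FlagTrans Γ) {J : Set ℤ} {m : ℤ}
    (hm : m ∈ Icc (-1) n \ J) {Ξ Ξ' : Set α} (hΞ : ReachableFlag Γ F n J Ξ)
    (hΞ' : IsFlagOf univ Ξ') (hsub : ∀ x ∈ Ξ', rk x ≠ m → x ∈ Ξ) :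
    ReachableFlag Γ F n J Ξ' := by
  obtain ⟨τ, hτ, rfl⟩ := hΞ
  obtain ⟨ρ, hρ, hρΞ'⟩ := hK.exists_mem_Rset_image_eq hFflag hΓ (hΞ'.image τ⁻¹)
    fun k hk hkm => by
      obtain ⟨x, hx, hxk⟩ := hK.flag_rk Ξ' hΞ' k hk
      have hτk := hK.apply_base_eq hFflag hFrk hk (hsub x hx (hxk ▸ hkm)) hxk
      exact ⟨x, hx, by simp [← hτk]⟩
  refine ⟨τ * ρ, mul_mem hτ (Rset_subset_rsetClosure hm hρ), ?_⟩
  rw [RelIso.coe_mul, image_comp, hρΞ']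
  simp [image_image]

/-- Pulled back by the element reaching `Ξ`, the flag `Ξ'` contains `F k` besides the `F l`,
`l ∈ J`, so `hIH` applies to it. -/
theorem ReachableFlag.of_mem_of_mem {J : Set ℤ} (hJ : J ⊆ Icc (-1) n) {k : ℤ}
    (hIH : AllFlagsReachable Γ F n (insert k J))
    {Ξ Ξ' : Set α} (hΞ : ReachableFlag Γ F n J Ξ) (hΞ' : IsFlagOf univ Ξ')
    (hJΞ' : F '' J ⊆ Ξ') {x : α} (hxΞ : x ∈ Ξ) (hxΞ' : x ∈ Ξ') (hxk : rk x = k) :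
    ReachableFlag Γ F n J Ξ' := by
  obtain ⟨τ, hτ, rfl⟩ := hΞ
  have hτk : τ (F k) = x := hK.apply_base_eq hFflag hFrk (hxk ▸ hK.rk_mem x) hxΞ hxk
  obtain ⟨σ, hσ, hσΞ'⟩ := hIH _ (hΞ'.image τ⁻¹) <| by
    rintro _ ⟨l, rfl | hl, rfl⟩
    · exact ⟨x, hxΞ', by simp [← hτk]⟩
    · refine ⟨F l, hJΞ' (mem_image_of_mem F hl), ?_⟩
      exact rsetClosure_le_stabilizer (hJ hl) (fun h => h.2 hl) (inv_mem hτ)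
  refine ⟨τ * σ, mul_mem hτ (rsetClosure_mono ?_ hσ), ?_⟩
  · exact sdiff_subset_sdiff_right (subset_insert _ _)
  · rw [RelIso.coe_mul, image_comp, hσΞ']
    simp [image_image]

/-- Exchanging the `m`-face of `Ψ` for `F m` gives a flag reachable by `hIH`, and `Ψ` differs
from it only in rank `m`. -/
theorem ReachableFlag.of_gap_two (hΓ : FlagTrans Γ) {J : Set ℤ} (hJ : J ⊆ Icc (-1) n) {m : ℤ}
    (hm : m ∈ Icc (-1) n \ J) (hm₁ : m - 1 ∈ J) (hm₂ : m + 1 ∈ J)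
    (hIH : AllFlagsReachable Γ F n (insert m J))
    {Ψ : Set α} (hΨ : IsFlagOf univ Ψ) (hΨJ : F '' J ⊆ Ψ) : ReachableFlag Γ F n J Ψ := by
  obtain ⟨G, hG, hGm⟩ := hK.flag_rk Ψ hΨ m hm.1
  have hmono := (hK.base_strictMonoOn hFflag hFrk).monotoneOn
  have hΨ' : IsFlagOf univ (insert (F m) (Ψ \ {G})) := by
    refine hK.isFlagOf_insert_diff hΨ hG (by rw [hFrk m hm.1, hGm]) (fun z hz hzm => ?_)
      fun z hz hzm => ?_
    · refine (hK.le_of_mem_chain hΨ.2.1 hz (hΨJ (mem_image_of_mem F hm₁)) ?_).trans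
        (hmono (hJ hm₁) hm.1 (by omega))
      rw [hFrk _ (hJ hm₁)]
      omega
    · refine (hmono hm.1 (hJ hm₂) (by omega)).trans
        (hK.le_of_mem_chain hΨ.2.1 (hΨJ (mem_image_of_mem F hm₂)) hz ?_)
      rw [hFrk _ (hJ hm₂)]
      omega
  refine ((hIH _ hΨ' ?_).mono (subset_insert _ _)).of_adjacent hK hFflag hFrk hΓ hm hΨ
    fun x hx hxm => mem_insert_of_mem _ ⟨hx, fun h => hxm (by rwa [mem_singleton_iff.1 h])⟩
  rintro _ ⟨l, rfl | hl, rfl⟩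
  · exact mem_insert _ _
  · refine mem_insert_of_mem _ ⟨hΨJ (mem_image_of_mem F hl), fun h => hm.2 ?_⟩
    have : l = m := by rw [← hFrk l (hJ hl), mem_singleton_iff.1 h, hGm]
    exact this ▸ hl

section Gap

variable {J : Set ℤ} (hJ : J ⊆ Icc (-1) n) {a b : ℤ} (ha : a ∈ J) (hb : b ∈ J)
  (hJab : ∀ k ∈ J, k ≤ a ∨ b ≤ k)
include hJ ha hb hJab

theorem IncComplex.le_or_le_of_lt_of_lt {w : α} (haw : F a < w) (hwb : w < F b) :
    ∀ z ∈ F '' J, w ≠ z → w ≤ z ∨ z ≤ w := by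
  have hmono := (hK.base_strictMonoOn hFflag hFrk).monotoneOn
  rintro _ ⟨k, hk, rfl⟩ -
  rcases hJab k hk with h | h
  · exact .inr ((hmono (hJ hk) (hJ ha) h).trans haw.le)
  · exact .inl (hwb.le.trans (hmono (hJ hb) (hJ hk) h))

omit hFflag in
theorem IncComplex.rk_mem_sdiff_of_lt_of_lt {w : α} (haw : F a < w) (hwb : w < F b) :
    rk w ∈ Icc (-1) n \ J := by
  have h₁ := hK.rk_strictMono _ _ haw
  have h₂ := hK.rk_strictMono _ _ hwb
  rw [hFrk a (hJ ha)] at h₁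
  rw [hFrk b (hJ hb)] at h₂
  exact ⟨hK.rk_mem w, fun hw => (hJab _ hw).elim (by omega) (by omega)⟩

theorem ReachableFlag.exists_mem_of_incident
    (hIH : ∀ k ∈ Icc (-1) n \ J, AllFlagsReachable Γ F n (insert k J))
    {y z : α} (hay : F a < y) (hyb : y < F b) (haz : F a < z) (hzb : z < F b)
    (hyz : y ≤ z ∨ z ≤ y) (hy : ∃ Ξ, ReachableFlag Γ F n J Ξ ∧ y ∈ Ξ) :
    ∃ Ξ, ReachableFlag Γ F n J Ξ ∧ z ∈ Ξ := by
  obtain ⟨Ξ, hΞ, hyΞ⟩ := hy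
  have hcmp {w : α} (haw : F a < w) (hwb : w < F b) :=
    hK.le_or_le_of_lt_of_lt hFflag hFrk hJ ha hb hJab haw hwb
  have hc : IsChain (· ≤ ·) (insert z (insert y (F '' J))) := by
    refine ((hFflag.2.1.mono (image_mono hJ)).insert (hcmp hay hyb)).insert ?_
    rintro w (rfl | hw) hzw
    exacts [hyz.symm, hcmp haz hzb w hw hzw]
  obtain ⟨Ξ', hcΞ', hΞ'⟩ := hK.exists_isFlagOf_superset hc
  refine ⟨Ξ', ?_, hcΞ' (mem_insert _ _)⟩
  exact hΞ.of_mem_of_mem hK hFflag hFrk hJ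
    (hIH _ (hK.rk_mem_sdiff_of_lt_of_lt hFrk hJ ha hb hJab hay hyb)) hΞ'
    (fun w hw => hcΞ' (mem_insert_of_mem _ (mem_insert_of_mem _ hw))) hyΞ
    (hcΞ' (mem_insert_of_mem _ (mem_insert _ _))) rfl

theorem ReachableFlag.of_connIn {m : ℤ} (ham : a < m) (hmb : m < b)
    (hconn : ConnIn (F a) (F b))
    (hIH : ∀ k ∈ Icc (-1) n \ J, AllFlagsReachable Γ F n (insert k J))
    {Ψ : Set α} (hΨ : IsFlagOf univ Ψ) (hΨJ : F '' J ⊆ Ψ) : ReachableFlag Γ F n J Ψ := by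
  have hm : m ∈ Icc (-1) n := ⟨by linarith [(hJ ha).1], by linarith [(hJ hb).2]⟩
  obtain ⟨G, hG, hGm⟩ := hK.flag_rk Ψ hΨ m hm
  have haG : F a < G := hK.lt_of_mem_chain hΨ.2.1 (hΨJ (mem_image_of_mem F ha)) hG
    (by rw [hFrk a (hJ ha), hGm]; exact ham)
  have hGb : G < F b := hK.lt_of_mem_chain hΨ.2.1 hG (hΨJ (mem_image_of_mem F hb))
    (by rw [hFrk b (hJ hb), hGm]; exact hmb)
  have hpath := hconn (F m) G (hK.base_strictMonoOn hFflag hFrk (hJ ha) hm ham)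
    (hK.base_strictMonoOn hFflag hFrk hm (hJ hb) hmb) haG hGb
  obtain ⟨Ξ, hΞ, hGΞ⟩ : ∃ Ξ, ReachableFlag Γ F n J Ξ ∧ G ∈ Ξ := by
    clear hG hGm haG hGb
    induction hpath with
    | refl => exact ⟨_, .base J, mem_image_of_mem F hm⟩
    | tail _ hyz ih =>
      obtain ⟨hay, hyb, haz, hzb, hyz⟩ := hyz
      exact ReachableFlag.exists_mem_of_incident hK hFflag hFrk hJ ha hb hJab hIH
        hay hyb haz hzb hyz ih
  exact hΞ.of_mem_of_mem hK hFflag hFrk hJ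
    (hIH _ (hK.rk_mem_sdiff_of_lt_of_lt hFrk hJ ha hb hJab haG hGb)) hΨ hΨJ hGΞ hG rfl

end Gap

theorem IncComplex.allFlagsReachable_of_bot_top_mem (hΓ : FlagTrans Γ) {J : Set ℤ}
    (hJ : J ⊆ Icc (-1) n) (hbot : -1 ∈ J) (htop : n ∈ J) : AllFlagsReachable Γ F n J := by
  induction hN : (Icc (-1) n \ J).ncard using Nat.strong_induction_on generalizing J with
  | _ N ih =>
  have hIH : ∀ k ∈ Icc (-1) n \ J, AllFlagsReachable Γ F n (insert k J) := fun k hk => by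
    refine ih _ ?_ (insert_subset hk.1 hJ) (mem_insert_of_mem _ hbot)
      (mem_insert_of_mem _ htop) rfl
    refine hN ▸ ncard_lt_ncard ((ssubset_iff_of_subset ?_).2
      ⟨k, hk, fun h => h.2 (mem_insert _ _)⟩) ((finite_Icc _ _).sdiff)
    exact sdiff_subset_sdiff_right (subset_insert _ _)
  intro Ψ hΨ hΨJ
  rcases (Icc (-1) n \ J).eq_empty_or_nonempty with hempty | ⟨m, hm⟩
  · rw [hFflag.2.2 Ψ (subset_univ _) hΨ.2.1 ((image_mono (sdiff_eq_empty.1 hempty)).trans hΨJ)]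
    exact .base J
  obtain ⟨a, ⟨ha, ham⟩, hamax⟩ := Int.exists_greatest_of_bdd (P := fun k => k ∈ J ∧ k < m)
    ⟨m, fun k hk => hk.2.le⟩ ⟨-1, hbot, hm.1.1.lt_of_ne fun h => hm.2 (h ▸ hbot)⟩
  obtain ⟨b, ⟨hb, hmb⟩, hbmin⟩ := Int.exists_least_of_bdd (P := fun k => k ∈ J ∧ m < k)
    ⟨m, fun k hk => hk.2.le⟩ ⟨n, htop, hm.1.2.lt_of_ne fun h => hm.2 (h ▸ htop)⟩
  have hJab : ∀ k ∈ J, k ≤ a ∨ b ≤ k := fun k hk => by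
    rcases lt_trichotomy k m with h | rfl | h
    exacts [.inl (hamax k ⟨hk, h⟩), (hm.2 hk).elim, .inr (hbmin k ⟨hk, h⟩)]
  obtain hab | hab : b = a + 2 ∨ a + 3 ≤ b := by omega
  · obtain rfl : m = a + 1 := by omega
    exact .of_gap_two hK hFflag hFrk hΓ hJ hm (by simpa using ha) (by convert hb using 1; omega)
      (hIH _ hm) hΨ hΨJ
  · have hconn := hK.strong_conn _ _ ((hK.base_strictMonoOn hFflag hFrk).monotoneOn
      (hJ ha) (hJ hb) (by omega)) (by rw [hFrk a (hJ ha), hFrk b (hJ hb)]; omega)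
    exact .of_connIn hK hFflag hFrk hJ ha hb hJab ham hmb hconn hIH hΨ hΨJ

theorem IncComplex.allFlagsReachable (hΓ : FlagTrans Γ) {J : Set ℤ} (hJ : J ⊆ Icc (-1) n) :
    AllFlagsReachable Γ F n J := by
  intro Ψ hΨ hΨJ
  refine (hK.allFlagsReachable_of_bot_top_mem hFflag hFrk hΓ (J := insert (-1) (insert n J)) ?_
    (mem_insert _ _) (mem_insert_of_mem _ (mem_insert _ _)) Ψ hΨ ?_).mono
    ((subset_insert _ _).trans (subset_insert _ _))
  · exact insert_subset ⟨le_rfl, hK.neg_one_le⟩ (insert_subset ⟨hK.neg_one_le, le_rfl⟩ hJ)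
  · rintro _ ⟨k, rfl | rfl | hk, rfl⟩
    exacts [hK.base_bot_mem hFrk hΨ, hK.base_top_mem hFrk hΨ, hΨJ ⟨k, hk, rfl⟩]

theorem IncComplex.mem_rsetClosure_of_forall_apply_eq (hΓ : FlagTrans Γ) {J : Set ℤ}
    (hJ : J ⊆ Icc (-1) n) {l : ℤ} (hl : l ∈ Icc (-1) n \ J) {g : α ≃o α} (hg : g ∈ Γ)
    (hfix : ∀ k ∈ J, g (F k) = F k) : g ∈ rsetClosure Γ F n (Icc (-1) n \ J) := by
  obtain ⟨σ, hσ, hσg⟩ := hK.allFlagsReachable hFflag hFrk hΓ hJ _ (hFflag.image g)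
    (by rintro _ ⟨k, hk, rfl⟩; exact ⟨F k, mem_image_of_mem F (hJ hk), hfix k hk⟩)
  have hflagStab : σ⁻¹ * g ∈ Rset Γ F n l := by
    refine ⟨mul_mem (inv_mem (rsetClosure_le _ hσ)) hg, fun k hk _ => ?_⟩
    have hσk : σ (F k) = g (F k) :=
      hK.apply_base_eq hFflag hFrk hk (hσg ▸ mem_image_of_mem _ (mem_image_of_mem F hk))
        (by rw [hK.rk_apply, hFrk k hk])
    simp [← hσk]
  simpa using mul_mem hσ (Rset_subset_rsetClosure hl hflagStab)

theorem IncComplex.mem_mul_of_le_apply (hΓ : FlagTrans Γ) {i j : ℤ} (hi : i ∈ Icc (-1) n)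
    (hj : j ∈ Icc 0 n) {χ : α ≃o α} (hχ : χ ∈ Γ) (hle : F i ≤ χ (F j)) :
    χ ∈ (rsetClosure Γ F n (Icc (i + 1) n) : Set (α ≃o α)) *
      rsetClosure Γ F n (Icc (-1) (j - 1)) := by
  have ⟨hi₁, hi₂⟩ := hi
  have ⟨hj₁, hj₂⟩ := hj
  have hmono := (hK.base_strictMonoOn hFflag hFrk).monotoneOn
  have hIi : Icc (-1) i ⊆ Icc (-1) n := Icc_subset_Icc_right hi₂
  have hIj : Icc j n ⊆ Icc (-1) n := Icc_subset_Icc_left (by omega)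
  have hc : IsChain (· ≤ ·) (F '' Icc (-1) i ∪ χ '' (F '' Icc j n)) := by
    refine isChain_union.2 ⟨hFflag.2.1.mono (image_mono hIi),
      (hFflag.2.1.mono (image_mono hIj)).image χ, ?_⟩
    rintro _ ⟨k, hk, rfl⟩ _ ⟨_, ⟨l, hl, rfl⟩, rfl⟩ -
    exact .inl (((hmono (hIi hk) hi hk.2).trans hle).trans
      (χ.monotone (hmono (hIj (left_mem_Icc.2 (by omega))) (hIj hl) hl.1)))
  obtain ⟨Ψ, hcΨ, hΨ⟩ := hK.exists_isFlagOf_superset hc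
  obtain ⟨y, hy, hyΨ⟩ := hK.allFlagsReachable hFflag hFrk hΓ hIi Ψ hΨ
    (subset_union_left.trans hcΨ)
  have hyχ : ∀ k ∈ Icc j n, (y⁻¹ * χ) (F k) = F k := fun k hk => by
    have : y (F k) = χ (F k) :=
      hK.apply_base_eq hFflag hFrk (hIj hk) (hyΨ ▸ hcΨ (.inr ⟨F k, ⟨k, hk, rfl⟩, rfl⟩))
        (by rw [hK.rk_apply, hFrk k (hIj hk)])
    simp [← this]
  have hm := hK.mem_rsetClosure_of_forall_apply_eq hFflag hFrk hΓ hIj (l := -1)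
    ⟨⟨le_rfl, by omega⟩, fun h => by linarith [h.1]⟩ (mul_mem (inv_mem (rsetClosure_le _ hy)) hχ)
    hyχ
  rw [show Icc (-1) n \ Icc (-1) i = Icc (i + 1) n by ext; simp only [mem_sdiff, mem_Icc]; omega]
    at hy
  rw [show Icc (-1) n \ Icc j n = Icc (-1) (j - 1) by ext; simp only [mem_sdiff, mem_Icc]; omega]
    at hm
  exact Set.mem_mul.2 ⟨y, hy, y⁻¹ * χ, hm, mul_inv_cancel_left y χ⟩

theorem IncComplex.rAct_le_of_inter_nonempty {i j : ℤ} (hi : i ∈ Icc (-1) n)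
    (hj : j ∈ Icc (-1) n) (hij : i ≤ j) {φ ψ : α ≃o α}
    (h : (((rsetClosure Γ F n (Icc (-1) n \ {i}) : Set (α ≃o α)) * {φ}) ∩
      ((rsetClosure Γ F n (Icc (-1) n \ {j}) : Set (α ≃o α)) * {ψ})).Nonempty) :
    rAct (F i) φ ≤ rAct (F j) ψ := by
  obtain ⟨_, hγφ, hγψ⟩ := h
  obtain ⟨g, hg, φ, rfl, rfl⟩ := Set.mem_mul.1 hγφ
  obtain ⟨g', hg', ψ, rfl, hγ⟩ := Set.mem_mul.1 hγψ
  have hgi : g⁻¹ (F i) = F i := rsetClosure_le_stabilizer hi (fun h => h.2 rfl) (inv_mem hg)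
  have hg'j : g'⁻¹ (F j) = F j := rsetClosure_le_stabilizer hj (fun h => h.2 rfl) (inv_mem hg')
  calc rAct (F i) φ = (g * φ)⁻¹ (F i) := by rw [rAct, mul_inv_rev, RelIso.mul_apply, hgi]
    _ ≤ (g * φ)⁻¹ (F j) := (g * φ)⁻¹.monotone <|
      (hK.base_strictMonoOn hFflag hFrk).monotoneOn hi hj hij
    _ = rAct (F j) ψ := by rw [← hγ, rAct, mul_inv_rev, RelIso.mul_apply, hg'j]

end BaseFlag

theorem inter_nonempty_of_mul_inv_mem_mul {G : Type*} [Group G] {H K A B : Subgroup G}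
    (hHA : H ≤ A) (hKB : K ≤ B) {φ ψ : G} (h : φ * ψ⁻¹ ∈ (H : Set G) * K) :
    (((A : Set G) * {φ}) ∩ ((B : Set G) * {ψ})).Nonempty := by
  obtain ⟨y, hy, x, hx, hyx⟩ := Set.mem_mul.1 h
  refine ⟨y⁻¹ * φ, Set.mem_mul.2 ⟨y⁻¹, hHA (inv_mem hy), φ, rfl, rfl⟩,
    Set.mem_mul.2 ⟨x, hKB hx, ψ, rfl, ?_⟩⟩
  rw [eq_inv_mul_iff_mul_eq, ← mul_assoc, hyx, inv_mul_cancel_right]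

theorem incidence_characterization_general
    {α : Type*} [PartialOrder α] [BoundedOrder α] (n : ℤ) (rk : α → ℤ)
    (hK : IncComplex α n rk)
    (Γ : Subgroup (α ≃o α)) (hΓ : FlagTrans Γ)
    (F : ℤ → α) (hFflag : IsFlagOf Set.univ (F '' Set.Icc (-1 : ℤ) n))
    (hFrk : ∀ i ∈ Set.Icc (-1 : ℤ) n, rk (F i) = i)
    (i j : ℤ) (h0i : 0 ≤ i) (hij : i ≤ j) (hj : j ≤ n - 1)
    (φ ψ : α ≃o α) (hφ : φ ∈ Γ) (hψ : ψ ∈ Γ) :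
    List.TFAE
      [ rAct (F i) φ ≤ rAct (F j) ψ,
        φ * ψ⁻¹ ∈
          (↑(Subgroup.closure (⋃ l ∈ Set.Icc (i + 1) n, Rset Γ F n l)) :
              Set (α ≃o α)) *
            ↑(Subgroup.closure (⋃ l ∈ Set.Icc (-1 : ℤ) (j - 1), Rset Γ F n l)),
        (((↑(Subgroup.closure (⋃ k ∈ Set.Icc (-1 : ℤ) n \ {i}, Rset Γ F n k)) :
              Set (α ≃o α)) * {φ}) ∩
            ((↑(Subgroup.closure
                (⋃ k ∈ Set.Icc (-1 : ℤ) n \ {j}, Rset Γ F n k)) :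
              Set (α ≃o α)) * {ψ})).Nonempty ] := by
  have hi : i ∈ Icc (-1) n := ⟨by omega, by omega⟩
  have hj' : j ∈ Icc (-1) n := ⟨by omega, by omega⟩
  tfae_have 1 → 2 := fun h => hK.mem_mul_of_le_apply hFflag hFrk hΓ hi ⟨by omega, by omega⟩
    (mul_mem hφ (inv_mem hψ)) (by simpa [rAct] using φ.monotone h)
  tfae_have 2 → 3 := fun h => inter_nonempty_of_mul_inv_mem_mul
    (rsetClosure_mono fun k => by simp only [mem_Icc, mem_sdiff, mem_singleton_iff]; omega)
    (rsetClosure_mono fun k => by simp only [mem_Icc, mem_sdiff, mem_singleton_iff]; omega) h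
  tfae_have 3 → 1 := hK.rAct_le_of_inter_nonempty hFflag hFrk hi hj' hij
  tfae_finish

/-- characterization of the partial order of a regular incidence
complex in terms of a flag-transitive subgroup: for `0 ≤ i ≤ j ≤ n-1` and
`φ, ψ ∈ Γ` the conditions (a) `F_i φ ≤ F_j ψ`, (b) `φψ⁻¹ ∈ Γ_{i+1}^+ Γ_{j-1}^-`,
and (c) `Γ_i φ ∩ Γ_j ψ ≠ ∅` are equivalent. -/
theorem incidence_characterization
    {α : Type*} [PartialOrder α] [BoundedOrder α] (n : ℤ) (rk : α → ℤ)
    (hn : 1 ≤ n) (hK : IncComplex α n rk)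
    (Γ : Subgroup (α ≃o α)) (hΓ : FlagTrans Γ)
    (F : ℤ → α) (hFflag : IsFlagOf Set.univ (F '' Set.Icc (-1 : ℤ) n))
    (hFrk : ∀ i ∈ Set.Icc (-1 : ℤ) n, rk (F i) = i)
    (i j : ℤ) (h0i : 0 ≤ i) (hij : i ≤ j) (hj : j ≤ n - 1)
    (φ ψ : α ≃o α) (hφ : φ ∈ Γ) (hψ : ψ ∈ Γ) :
    List.TFAE
      [ rAct (F i) φ ≤ rAct (F j) ψ,
        φ * ψ⁻¹ ∈
          (↑(Subgroup.closure (⋃ l ∈ Set.Icc (i + 1) n, Rset Γ F n l)) :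
              Set (α ≃o α)) *
            ↑(Subgroup.closure (⋃ l ∈ Set.Icc (-1 : ℤ) (j - 1), Rset Γ F n l)),
        (((↑(Subgroup.closure (⋃ k ∈ Set.Icc (-1 : ℤ) n \ {i}, Rset Γ F n k)) :
              Set (α ≃o α)) * {φ}) ∩
            ((↑(Subgroup.closure
                (⋃ k ∈ Set.Icc (-1 : ℤ) n \ {j}, Rset Γ F n k)) :
              Set (α ≃o α)) * {ψ})).Nonempty ] :=
  incidence_characterization_general n rk hK Γ hΓ F hFflag hFrk i j h0i hij hj φ ψ hφ hψ
end

section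
/- Let Γ = ⟨R_{-1}, R_0, ..., R_n⟩ be a generalized string C-group. Then for -1 ≤ i ≤ n, Γ_i := ⟨R_j : j ≠ i⟩ satisfies Γ_i = Γ_{i-1}^- Γ_{i+1}^+ = Γ_{i+1}^+ Γ_{i-1}^-, where Γ_k^- := ⟨R_j : j ≤ k⟩ and Γ_k^+ := ⟨R_j : j ≥ k⟩. -/
/-!
`Γ_i` is the join of `A = Γ_{i-1}^-` and `B = Γ_{i+1}^+`. Each generator `R_k` of `A` permutes
(as a set) with each generator `R_j` of `B`: either one of them is `R_{-1}`, which is contained in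
the other, or `k < j - 1` and the commutation rule applies. Permutability passes from generators
to the subgroups they generate, so `AB = BA`, and the product of two permuting subgroups is their
join.
-/

open Set Pointwise

/-- The distinguished subgroup `Γ_I = ⟨R_i : i ∈ I⟩` of a group with a system of
generating subgroups `R : ℤ → Subgroup G` (with the convention `Γ_∅ = R_{-1}`,
which is harmless for nonempty `I ⊆ {-1,…,n}` since `R_{-1}` is contained in
every `R_i`). -/
def GamI {G : Type*} [Group G] (R : ℤ → Subgroup G) (I : Set ℤ) : Subgroup G :=
  R (-1) ⊔ ⨆ i ∈ I, R i

/-- `Γ_k^- = ⟨R_j : j ≤ k⟩`. -/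
def Gminus {G : Type*} [Group G] (R : ℤ → Subgroup G) (k : ℤ) : Subgroup G :=
  GamI R (Set.Icc (-1) k)

/-- `Γ_k^+ = ⟨R_j : j ≥ k⟩`. -/
def Gplus {G : Type*} [Group G] (R : ℤ → Subgroup G) (n k : ℤ) : Subgroup G :=
  GamI R (Set.Icc k n)

/-- `Γ_i = ⟨R_j : j ≠ i⟩`. -/
def Gsub {G : Type*} [Group G] (R : ℤ → Subgroup G) (n i : ℤ) : Subgroup G :=
  GamI R (Set.Icc (-1) n \ {i})

/-- A generalized string C-group of rank `n`: a group generated by subgroups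
`R_{-1}, R_0, …, R_n` with `R_{-1} = R_n` a proper subgroup of each `R_i`
(`0 ≤ i ≤ n-1`), satisfying the intersection property and the commutation rules
`R_i R_j = R_j R_i` (as product sets) for non-adjacent indices. -/
structure GenStringC {G : Type*} [Group G] (n : ℤ) (R : ℤ → Subgroup G) : Prop where
  one_le_n : 1 ≤ n
  gen_top : GamI R (Set.Icc (-1) n) = ⊤
  ends_eq : R (-1) = R n
  ends_lt : ∀ i ∈ Set.Icc (0 : ℤ) (n - 1), R (-1) < R i
  inter : ∀ I J : Set ℤ, I ⊆ Set.Icc (-1 : ℤ) n → J ⊆ Set.Icc (-1 : ℤ) n →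
    GamI R I ⊓ GamI R J = GamI R (I ∩ J)
  comm : ∀ i j : ℤ, -1 ≤ i → i < j - 1 → j ≤ n →
    (↑(R i) : Set G) * ↑(R j) = (↑(R j) : Set G) * ↑(R i)

namespace Subgroup

variable {G : Type*} [Group G]

lemma coe_mul_comm_of_le {H K : Subgroup G} (h : H ≤ K) :
    (H : Set G) * (K : Set G) = (K : Set G) * (H : Set G) := by
  have hHK : (H : Set G) * (K : Set G) = K :=
    (subset_mul_right _ H.one_mem).antisymm' <|
      (mul_subset_mul_right h).trans (coe_mul_coe K).le
  have hKH : (K : Set G) * (H : Set G) = K :=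
    (subset_mul_left _ H.one_mem).antisymm' <| (mul_subset_mul_left h).trans (coe_mul_coe K).le
  rw [hHK, hKH]

lemma coe_mul_comm_of_mul_subset {H K : Subgroup G}
    (h : (K : Set G) * (H : Set G) ⊆ (H : Set G) * (K : Set G)) :
    (H : Set G) * (K : Set G) = (K : Set G) * (H : Set G) := by
  refine (inv_subset_inv.1 ?_).antisymm h
  rwa [mul_inv_rev, mul_inv_rev, inv_coe_set, inv_coe_set]

lemma coe_sup_of_mul_comm {H K : Subgroup G}
    (h : (H : Set G) * (K : Set G) = (K : Set G) * (H : Set G)) :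
    ((H ⊔ K : Subgroup G) : Set G) = (H : Set G) * (K : Set G) := by
  have hmul : (H * K : Set G) * (H * K) = (H : Set G) * (K : Set G) := by
    rw [mul_assoc, ← mul_assoc (K : Set G), ← h, mul_assoc, coe_mul_coe, ← mul_assoc,
      coe_mul_coe]
  let M : Subgroup G :=
    { carrier := (H : Set G) * (K : Set G)
      one_mem' := ⟨1, H.one_mem, 1, K.one_mem, one_mul 1⟩
      mul_mem' := fun hx hy => hmul ▸ mul_mem_mul hx hy
      inv_mem' := fun {x} hx => by
        have hx' := inv_mem_inv.2 hx
        rwa [mul_inv_rev, inv_coe_set, inv_coe_set, ← h] at hx' }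
  refine Subset.antisymm (show H ⊔ K ≤ M from sup_le (fun x hx => ?_) fun x hx => ?_) ?_
  · exact ⟨x, hx, 1, K.one_mem, mul_one x⟩
  · exact ⟨1, H.one_mem, x, hx, one_mul x⟩
  · rintro _ ⟨x, hx, y, hy, rfl⟩
    exact mul_mem (mem_sup_left hx) (mem_sup_right hy)

lemma coe_mul_iSup_comm {ι : Sort*} {H : Subgroup G} {K : ι → Subgroup G}
    (h : ∀ i, (H : Set G) * (K i : Set G) = (K i : Set G) * (H : Set G)) :
    (H : Set G) * ↑(⨆ i, K i) = ↑(⨆ i, K i) * (H : Set G) := by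
  refine coe_mul_comm_of_mul_subset ?_
  rintro _ ⟨x, hx, g, hg, rfl⟩
  refine iSup_induction K (C := fun x => ∀ g ∈ H, x * g ∈ (H : Set G) * ↑(⨆ i, K i)) hx
    (fun i x hx g hg => ?_) (fun g hg => ⟨g, hg, 1, one_mem _, by simp⟩)
    (fun x y hx hy g hg => ?_) g hg
  · exact mul_subset_mul_left (le_iSup K i) (h i ▸ mul_mem_mul hx hg)
  · obtain ⟨g', hg', y', hy', hy : g' * y' = y * g⟩ := hy g hg
    obtain ⟨g'', hg'', x', hx', hx : g'' * x' = x * g'⟩ := hx g' hg'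
    refine ⟨g'', hg'', x' * y', mul_mem hx' hy', ?_⟩
    change g'' * (x' * y') = x * y * g
    rw [← mul_assoc, hx, mul_assoc, hy, ← mul_assoc]

lemma coe_biSup_mul_biSup_comm {ι κ : Type*} {H : ι → Subgroup G} {K : κ → Subgroup G}
    {s : Set ι} {t : Set κ}
    (h : ∀ i ∈ s, ∀ j ∈ t, (H i : Set G) * (K j : Set G) = (K j : Set G) * (H i : Set G)) :
    (↑(⨆ i ∈ s, H i) : Set G) * ↑(⨆ j ∈ t, K j) = ↑(⨆ j ∈ t, K j) * ↑(⨆ i ∈ s, H i) :=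
  coe_mul_iSup_comm fun j => coe_mul_iSup_comm fun hj =>
    (coe_mul_iSup_comm fun i => coe_mul_iSup_comm fun hi => (h i hi j hj).symm).symm

end Subgroup

section GamI

variable {G : Type*} [Group G] (R : ℤ → Subgroup G)

lemma gamI_eq_biSup (I : Set ℤ) : GamI R I = ⨆ j ∈ insert (-1) I, R j :=
  iSup_insert.symm

lemma gamI_sup_gamI (I J : Set ℤ) : GamI R I ⊔ GamI R J = GamI R (I ∪ J) := by
  rw [GamI, GamI, GamI, iSup_union, sup_sup_sup_comm, sup_idem]

end GamI

namespace GenStringC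

variable {G : Type*} [Group G] {n : ℤ} {R : ℤ → Subgroup G}

lemma ends_le (hC : GenStringC n R) {j : ℤ} (h₁ : -1 ≤ j) (h₂ : j ≤ n) : R (-1) ≤ R j := by
  obtain rfl | h₁ := h₁.eq_or_lt
  · exact le_rfl
  obtain rfl | h₂ := h₂.eq_or_lt
  · exact hC.ends_eq.le
  · exact (hC.ends_lt j ⟨by omega, by omega⟩).le

lemma coe_mul_comm (hC : GenStringC n R) {k j : ℤ} (hk : k ∈ Icc (-1) n)
    (hj : j ∈ Icc (-1) n) (hkj : k = -1 ∨ j = -1 ∨ k < j - 1) :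
    (R k : Set G) * (R j : Set G) = (R j : Set G) * (R k : Set G) := by
  rcases hkj with rfl | rfl | hkj
  · exact Subgroup.coe_mul_comm_of_le (hC.ends_le hj.1 hj.2)
  · exact (Subgroup.coe_mul_comm_of_le (hC.ends_le hk.1 hk.2)).symm
  · exact hC.comm k j hk.1 hkj hj.2

end GenStringC

/-- in a generalized string C-group,
`Γ_i = Γ_{i-1}^- Γ_{i+1}^+ = Γ_{i+1}^+ Γ_{i-1}^-` as product sets. -/
theorem gsub_eq_product {G : Type*} [Group G]
    (n : ℤ) (R : ℤ → Subgroup G) (hC : GenStringC n R)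
    (i : ℤ) (hi : -1 ≤ i) (hin : i ≤ n) :
    (↑(Gsub R n i) : Set G) = ↑(Gminus R (i - 1)) * ↑(Gplus R n (i + 1)) ∧
      (↑(Gsub R n i) : Set G) = ↑(Gplus R n (i + 1)) * ↑(Gminus R (i - 1)) := by
  have hsplit : Gsub R n i = Gminus R (i - 1) ⊔ Gplus R n (i + 1) := by
    rw [Gminus, Gplus, Gsub, gamI_sup_gamI]
    congr 1
    ext x
    simp only [mem_union, mem_Icc, mem_sdiff, mem_singleton_iff]
    omega
  have hcomm : (Gminus R (i - 1) : Set G) * (Gplus R n (i + 1) : Set G) =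
      (Gplus R n (i + 1) : Set G) * (Gminus R (i - 1) : Set G) := by
    rw [Gminus, Gplus, gamI_eq_biSup, gamI_eq_biSup]
    refine Subgroup.coe_biSup_mul_biSup_comm fun k hk j hj => hC.coe_mul_comm ?_ ?_ ?_ <;>
      simp only [mem_insert_iff, mem_Icc] at hk hj ⊢ <;> omega
  rw [hsplit, Subgroup.coe_sup_of_mul_comm hcomm]
  exact ⟨rfl, hcomm⟩
end

section
/- Let Γ = ⟨R_{-1}, R_0, ..., R_n⟩ be a generalized string C-group. Then for i ≤ k ≤ l ≤ j (all in {-1,...,n}): Γ_{k+1}^+ Γ_{l-1}^- ∩ Γ_{\{i+1,...,j-1\}} = Γ_{\{k+1,...,j-1\}} Γ_{\{i+1,...,l-1\}}, where products denote product sets and Γ_I := ⟨R_m : m ∈ I⟩ (with Γ_∅ := R_{-1}). -/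
open Set Pointwise

/-!
If `a * b ∈ Γ_{i+1,…,j-1}` with `a ∈ Γ_{k+1}^+` and `b ∈ Γ_{l-1}^-`, then `a = (a * b) * b⁻¹` lies in
`Γ_{j-1}^-` and `b = a⁻¹ * (a * b)` lies in `Γ_{i+1}^+`. The intersection property turns these
into `a ∈ Γ_{k+1}^+ ∩ Γ_{j-1}^- = Γ_{k+1,…,j-1}` and `b ∈ Γ_{l-1}^- ∩ Γ_{i+1}^+ = Γ_{i+1,…,l-1}`.
-/

theorem Subgroup.mul_inter_eq_mul_inf {G : Type*} [Group G] {A B C M N : Subgroup G}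
    (hBM : B ≤ M) (hCM : C ≤ M) (hAN : A ≤ N) (hCN : C ≤ N)
    (hAMC : A ⊓ M ≤ C) (hBNC : B ⊓ N ≤ C) :
    ((A : Set G) * B) ∩ C = ((A ⊓ M : Subgroup G) : Set G) * ↑(B ⊓ N) := by
  ext g
  constructor
  · rintro ⟨⟨a, ha, b, hb, rfl⟩, hab⟩
    have haM : a ∈ M := by
      simpa using mul_mem (hCM hab) (inv_mem (hBM hb))
    have hbN : b ∈ N := by
      simpa using mul_mem (inv_mem (hAN ha)) (hCN hab)
    exact ⟨a, ⟨ha, haM⟩, b, ⟨hb, hbN⟩, rfl⟩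
  · rintro ⟨a, ha, b, hb, rfl⟩
    exact ⟨⟨a, ha.1, b, hb.1, rfl⟩, mul_mem (hAMC ha) (hBNC hb)⟩

lemma GamI_mono {G : Type*} [Group G] (R : ℤ → Subgroup G) {I J : Set ℤ}
    (h : I ⊆ J) : GamI R I ≤ GamI R J :=
  sup_le_sup_left (biSup_mono h) _

lemma GenStringC.Gplus_inf_Gminus {G : Type*} [Group G] {n : ℤ} {R : ℤ → Subgroup G}
    (hC : GenStringC n R) {a b : ℤ} (ha : -1 ≤ a) (hb : b ≤ n) :
    Gplus R n a ⊓ Gminus R b = GamI R (Set.Icc a b) := by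
  rw [Gplus, Gminus, hC.inter _ _ (Set.Icc_subset_Icc ha le_rfl)
    (Set.Icc_subset_Icc le_rfl hb), Set.Icc_inter_Icc, max_eq_left ha, min_eq_right hb]

theorem product_intersection_identity_general {G : Type*} [Group G]
    (n : ℤ) (R : ℤ → Subgroup G) (hC : GenStringC n R)
    (i k l j : ℤ) (hi : -1 ≤ i) (hik : i ≤ k) (hlj : l ≤ j)
    (hj : j ≤ n) :
    ((↑(Gplus R n (k + 1)) : Set G) * ↑(Gminus R (l - 1))) ∩
        ↑(GamI R (Set.Icc (i + 1) (j - 1))) =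
      (↑(GamI R (Set.Icc (k + 1) (j - 1))) : Set G) *
        ↑(GamI R (Set.Icc (i + 1) (l - 1))) := by
  have hAM : Gplus R n (k + 1) ⊓ Gminus R (j - 1) = GamI R (Set.Icc (k + 1) (j - 1)) :=
    hC.Gplus_inf_Gminus (by omega) (by omega)
  have hBN : Gminus R (l - 1) ⊓ Gplus R n (i + 1) = GamI R (Set.Icc (i + 1) (l - 1)) := by
    rw [inf_comm]
    exact hC.Gplus_inf_Gminus (by omega) (by omega)
  rw [Subgroup.mul_inter_eq_mul_inf (M := Gminus R (j - 1)) (N := Gplus R n (i + 1))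
    ?_ ?_ ?_ ?_ (hAM.le.trans ?_) (hBN.le.trans ?_), hAM, hBN]
  all_goals exact GamI_mono R (Set.Icc_subset_Icc (by omega) (by omega))

/-- in a generalized string C-group, for `i ≤ k ≤ l ≤ j`,
`Γ_{k+1}^+ Γ_{l-1}^- ∩ Γ_{{i+1,…,j-1}} = Γ_{{k+1,…,j-1}} Γ_{{i+1,…,l-1}}`. -/
theorem product_intersection_identity {G : Type*} [Group G]
    (n : ℤ) (R : ℤ → Subgroup G) (hC : GenStringC n R)
    (i k l j : ℤ) (hi : -1 ≤ i) (hik : i ≤ k) (hkl : k ≤ l) (hlj : l ≤ j)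
    (hj : j ≤ n) :
    ((↑(Gplus R n (k + 1)) : Set G) * ↑(Gminus R (l - 1))) ∩
        ↑(GamI R (Set.Icc (i + 1) (j - 1))) =
      (↑(GamI R (Set.Icc (k + 1) (j - 1))) : Set G) *
        ↑(GamI R (Set.Icc (i + 1) (l - 1))) :=
  product_intersection_identity_general n R hC i k l j hi hik hlj hj
end
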